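/- Any Killing vector field X on the Lobachevskian (hyperbolic) space with metric Ψ·Σₖ(dxᵏ)² on the unit ball, where Ψ(x) = 4/(1 − Σₖ(xᵏ)²)², has components Xⁱ(x) = xⁱ·(Σₖ bₖxᵏ) − (1/2)bᵢ·Σₖ(xᵏ)² + Σₖ f_{ik}xᵏ − (1/2)bᵢ for some constants bᵢ and a skew-symmetric matrix (f_{ik}). -/

import Mathlib

noncomputable section
open scoped BigOperators

/-- Partial derivative in the `i`-th coordinate direction. -/
def pd {n : ℕ} (i : Fin n) (f : (Fin n → ℝ) → ℝ) (x : Fin n → ℝ) : ℝ :=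
  fderiv ℝ f x (Pi.single i 1)

/-- Christoffel symbols `Γᵏᵢⱼ = (1/2Ψ)(δₖⱼ∂ᵢΨ + δₖᵢ∂ⱼΨ − δᵢⱼ∂ₖΨ)`
of the conformal metric `h = Ψ·Σ(dxᵏ)²`. -/
def gammaConf {n : ℕ} (Ψ : (Fin n → ℝ) → ℝ) (k i j : Fin n) (x : Fin n → ℝ) : ℝ :=
  (1 / (2 * Ψ x)) *
    ((if k = j then (1:ℝ) else 0) * pd i Ψ x + (if k = i then (1:ℝ) else 0) * pd j Ψ x
      - (if i = j then (1:ℝ) else 0) * pd k Ψ x)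

/-- Covariant derivative `∇ᵢAⱼ = ∂ᵢAⱼ − Σₖ Γᵏᵢⱼ Aₖ` of a 1-form for the metric `Ψ·Σ(dxᵏ)²`. -/
def covA {n : ℕ} (Ψ : (Fin n → ℝ) → ℝ) (A : Fin n → (Fin n → ℝ) → ℝ)
    (i j : Fin n) (x : Fin n → ℝ) : ℝ :=
  pd i (A j) x - ∑ k, gammaConf Ψ k i j x * A k x

/-- Conformal factor of the hyperbolic (Lobachevskian) metric on the unit ball. -/
def psiL {n : ℕ} (x : Fin n → ℝ) : ℝ := 4 / (1 - ∑ k, (x k)^2)^2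

/-- The open unit (Euclidean) ball in `ℝⁿ`. -/
def eball (n : ℕ) : Set (Fin n → ℝ) := {x | ∑ k, (x k)^2 < 1}

namespace S5
open scoped ContDiff

variable {n : ℕ}

/-- sum of squares -/
def Q {n : ℕ} (x : Fin n → ℝ) : ℝ := ∑ k, (x k)^2

lemma contDiff_Q : ContDiff ℝ ∞ (Q (n := n)) := by
  apply ContDiff.sum (fun k _ => ?_)
  exact ((ContinuousLinearMap.proj k : (Fin n → ℝ) →L[ℝ] ℝ).contDiff).pow 2

lemma isOpen_eball : IsOpen (eball n) := by
  have : eball n = Q ⁻¹' (Set.Iio 1) := rfl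
  rw [this]
  exact (contDiff_Q.continuous).isOpen_preimage _ isOpen_Iio

lemma convex_eball : Convex ℝ (eball n) := by
  intro x hx y hy a b ha hb hab
  simp only [eball, Set.mem_setOf_eq] at *
  have key : ∑ k, ((a • x + b • y) k)^2 ≤ a * ∑ k, (x k)^2 + b * ∑ k, (y k)^2 := by
    rw [Finset.mul_sum, Finset.mul_sum, ← Finset.sum_add_distrib]
    apply Finset.sum_le_sum; intro k _
    have h2 : (a * x k + b * y k)^2 ≤ a * (x k)^2 + b * (y k)^2 := by
      nlinarith [mul_nonneg (mul_nonneg ha hb) (sq_nonneg (x k - y k)), sq_nonneg (x k - y k)]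
    simpa using h2
  rcases eq_or_lt_of_le ha with h|h
  · have hb1 : b = 1 := by linarith
    have : a * ∑ k, (x k)^2 + b * ∑ k, (y k)^2 < 1 := by rw [← h, hb1]; simpa using hy
    linarith
  · have h1 : a * ∑ k, (x k)^2 < a * 1 := by exact mul_lt_mul_of_pos_left hx h
    have h2 : b * ∑ k, (y k)^2 ≤ b * 1 := mul_le_mul_of_nonneg_left (le_of_lt hy) hb
    nlinarith

lemma zero_mem_eball : (0 : Fin n → ℝ) ∈ eball n := by simp [eball]

lemma Q_lt_one {x : Fin n → ℝ} (hx : x ∈ eball n) : Q x < 1 := hx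

lemma oneSubQ_pos {x : Fin n → ℝ} (hx : x ∈ eball n) : 0 < 1 - Q x := by
  have := Q_lt_one hx; linarith

lemma oneSubQ_ne {x : Fin n → ℝ} (hx : x ∈ eball n) : 1 - Q x ≠ 0 :=
  ne_of_gt (oneSubQ_pos hx)

/-- smooth on the ball -/
def Sm (n : ℕ) (f : (Fin n → ℝ) → ℝ) : Prop := ContDiffOn ℝ ∞ f (eball n)

lemma Sm.diffAt {f : (Fin n → ℝ) → ℝ} (hf : Sm n f) {x : Fin n → ℝ} (hx : x ∈ eball n) :
    DifferentiableAt ℝ f x :=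
  (hf.differentiableOn (by norm_num)).differentiableAt (isOpen_eball.mem_nhds hx)

lemma Sm.pd {f : (Fin n → ℝ) → ℝ} (hf : Sm n f) (i : Fin n) : Sm n (pd i f) := by
  have h1 : ContDiffOn ℝ ∞ (fderiv ℝ f) (eball n) :=
    hf.fderiv_of_isOpen isOpen_eball (by norm_num)
  exact h1.clm_apply contDiffOn_const

lemma Sm.add {f g} (hf : Sm n f) (hg : Sm n g) : Sm n (fun x => f x + g x) := ContDiffOn.add hf hg
lemma Sm.sub {f g} (hf : Sm n f) (hg : Sm n g) : Sm n (fun x => f x - g x) := ContDiffOn.sub hf hg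
lemma Sm.mul {f g} (hf : Sm n f) (hg : Sm n g) : Sm n (fun x => f x * g x) := ContDiffOn.mul hf hg
lemma Sm.neg {f} (hf : Sm n f) : Sm n (fun x => - f x) := ContDiffOn.neg hf
lemma Sm.const (c : ℝ) : Sm n (fun _ => c) := contDiffOn_const
lemma Sm.coord (j : Fin n) : Sm n (fun x => x j) :=
  ((ContinuousLinearMap.proj j : (Fin n → ℝ) →L[ℝ] ℝ).contDiff).contDiffOn
lemma Sm.sum {f : Fin n → (Fin n → ℝ) → ℝ} (hf : ∀ k, Sm n (f k)) :
    Sm n (fun x => ∑ k, f k x) := ContDiffOn.sum (fun k _ => hf k)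
lemma Sm.div {f g} (hf : Sm n f) (hg : Sm n g) (h : ∀ x ∈ eball n, g x ≠ 0) :
    Sm n (fun x => f x / g x) := ContDiffOn.div hf hg h
lemma sm_Q : Sm n (Q (n := n)) := contDiff_Q.contDiffOn
lemma sm_psiL : Sm n (psiL (n := n)) := by
  have : psiL (n := n) = fun x => 4 / (1 - Q x)^2 := rfl
  rw [this]
  exact Sm.div (Sm.const 4) (((Sm.const 1).sub sm_Q).mul ((Sm.const 1).sub sm_Q) |>.congr
    (by intro x hx; ring)) (fun x hx => pow_ne_zero 2 (oneSubQ_ne hx))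

/-! pointwise pd calculus -/

lemma pd_congr {f g : (Fin n → ℝ) → ℝ} {x : Fin n → ℝ} (h : Set.EqOn f g (eball n))
    (hx : x ∈ eball n) (i : Fin n) : pd i f x = pd i g x := by
  unfold pd
  rw [Filter.EventuallyEq.fderiv_eq
    (Filter.eventuallyEq_of_mem (isOpen_eball.mem_nhds hx) h)]

lemma pd_add {f g : (Fin n → ℝ) → ℝ} {x : Fin n → ℝ} (hf : DifferentiableAt ℝ f x)
    (hg : DifferentiableAt ℝ g x) (i : Fin n) :
    pd i (fun y => f y + g y) x = pd i f x + pd i g x := by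
  unfold pd; rw [fderiv_fun_add hf hg]; simp

lemma pd_sub {f g : (Fin n → ℝ) → ℝ} {x : Fin n → ℝ} (hf : DifferentiableAt ℝ f x)
    (hg : DifferentiableAt ℝ g x) (i : Fin n) :
    pd i (fun y => f y - g y) x = pd i f x - pd i g x := by
  unfold pd; rw [fderiv_fun_sub hf hg]; simp

lemma pd_const (c : ℝ) (x : Fin n → ℝ) (i : Fin n) : pd i (fun _ => c) x = 0 := by
  unfold pd; rw [fderiv_fun_const]; simp

lemma pd_mul {f g : (Fin n → ℝ) → ℝ} {x : Fin n → ℝ} (hf : DifferentiableAt ℝ f x)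
    (hg : DifferentiableAt ℝ g x) (i : Fin n) :
    pd i (fun y => f y * g y) x = f x * pd i g x + g x * pd i f x := by
  unfold pd; rw [fderiv_fun_mul hf hg]; simp

lemma pd_sum {f : Fin n → (Fin n → ℝ) → ℝ} {x : Fin n → ℝ}
    (hf : ∀ k, DifferentiableAt ℝ (f k) x) (i : Fin n) :
    pd i (fun y => ∑ k, f k y) x = ∑ k, pd i (f k) x := by
  unfold pd; rw [fderiv_fun_sum (fun k _ => hf k)]; simp

lemma pd_coord (j : Fin n) (x : Fin n → ℝ) (i : Fin n) :
    pd i (fun y => y j) x = if i = j then 1 else 0 := by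
  have : (fun y : Fin n → ℝ => y j) = (ContinuousLinearMap.proj j : (Fin n → ℝ) →L[ℝ] ℝ) := rfl
  unfold pd; rw [this, ContinuousLinearMap.fderiv]
  by_cases h : i = j
  · subst h; simp [Pi.single_apply]
  · simp [Pi.single_apply, h, Ne.symm h]

lemma pd_const_mul {f : (Fin n → ℝ) → ℝ} {x : Fin n → ℝ} (hf : DifferentiableAt ℝ f x)
    (c : ℝ) (i : Fin n) : pd i (fun y => c * f y) x = c * pd i f x := by
  rw [pd_mul (differentiableAt_const c) hf, pd_const]; ring

lemma pd_neg {f : (Fin n → ℝ) → ℝ} {x : Fin n → ℝ} (hf : DifferentiableAt ℝ f x) (i : Fin n) :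
    pd i (fun y => - f y) x = - pd i f x := by
  have := pd_const_mul hf (-1) i
  simpa [neg_one_mul] using this

end S5

namespace S5
open scoped ContDiff
variable {n : ℕ}

lemma diffAt_coord {x : Fin n → ℝ} (j : Fin n) : DifferentiableAt ℝ (fun y : Fin n → ℝ => y j) x :=
  (ContinuousLinearMap.proj j : (Fin n → ℝ) →L[ℝ] ℝ).differentiable.differentiableAt

lemma pd_comm {f : (Fin n → ℝ) → ℝ} (hf : Sm n f) {x : Fin n → ℝ} (hx : x ∈ eball n)
    (i j : Fin n) : pd i (pd j f) x = pd j (pd i f) x := by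
  have hO := isOpen_eball (n := n)
  have hder : ContDiffOn ℝ ∞ (fderiv ℝ f) (eball n) := hf.fderiv_of_isOpen hO (by norm_num)
  have hd2 : DifferentiableAt ℝ (fderiv ℝ f) x :=
    (hder.differentiableOn (by norm_num)).differentiableAt (hO.mem_nhds hx)
  have hev : ∀ᶠ y in nhds x, HasFDerivAt f (fderiv ℝ f y) y := by
    filter_upwards [hO.mem_nhds hx] with y hy
    exact (hf.diffAt hy).hasFDerivAt
  have hsymm := second_derivative_symmetric_of_eventually hev hd2.hasFDerivAt
  have key : ∀ u v : Fin n → ℝ, fderiv ℝ (fun y => fderiv ℝ f y u) x v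
      = (fderiv ℝ (fderiv ℝ f) x v) u := by
    intro u v
    rw [fderiv_clm_apply hd2 (differentiableAt_const u)]
    simp
  unfold pd
  rw [key (Pi.single j 1) (Pi.single i 1), key (Pi.single i 1) (Pi.single j 1),
    hsymm (Pi.single i 1) (Pi.single j 1)]

lemma const_of_pd_zero {f : (Fin n → ℝ) → ℝ} (hf : Sm n f)
    (h : ∀ i, ∀ x ∈ eball n, pd i f x = 0)
    {x y : Fin n → ℝ} (hx : x ∈ eball n) (hy : y ∈ eball n) : f x = f y := by
  apply convex_eball.is_const_of_fderivWithin_eq_zero (hf.differentiableOn (by norm_num)) ?_ hx hy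
  intro z hz
  rw [fderivWithin_of_isOpen isOpen_eball hz]
  ext v
  have hv : v = ∑ i, v i • (Pi.single i 1 : Fin n → ℝ) := by
    ext j
    simp [Finset.sum_apply, Pi.single_apply, Finset.sum_ite_eq, mul_ite]
  have : fderiv ℝ f z v = ∑ i, v i • fderiv ℝ f z (Pi.single i 1) := by
    conv_lhs => rw [hv]
    rw [map_sum]
    simp
  simp only [ContinuousLinearMap.zero_apply, this]
  apply Finset.sum_eq_zero
  intro i _
  have := h i z hz
  unfold pd at this
  rw [this, smul_zero]

lemma pd_Q (i : Fin n) (x : Fin n → ℝ) : pd i Q x = 2 * x i := by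
  have h1 : pd i Q x = ∑ k, pd i (fun y => (y k)^2) x := by
    unfold Q
    exact pd_sum (fun k => ((diffAt_coord k).fun_mul (diffAt_coord k)).congr_of_eventuallyEq
      (by filter_upwards with y; ring)) i
  rw [h1]
  have h2 : ∀ k, pd i (fun y => (y k)^2) x = 2 * x k * (if i = k then 1 else 0) := by
    intro k
    have : (fun y : Fin n → ℝ => (y k)^2) = fun y => y k * y k := by funext y; ring
    rw [this, pd_mul (diffAt_coord k) (diffAt_coord k), pd_coord]
    ring
  simp only [h2]
  simp [Finset.sum_ite_eq, mul_ite]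

lemma diffAt_Q {x : Fin n → ℝ} : DifferentiableAt ℝ (Q (n := n)) x :=
  (contDiff_Q.differentiable (by norm_num)).differentiableAt

lemma diffAt_oneSubQ {x : Fin n → ℝ} : DifferentiableAt ℝ (fun y : Fin n → ℝ => 1 - Q y) x :=
  (differentiableAt_const 1).sub diffAt_Q

lemma pd_oneSubQ (i : Fin n) (x : Fin n → ℝ) : pd i (fun y => 1 - Q y) x = -(2 * x i) := by
  rw [pd_sub (differentiableAt_const 1) diffAt_Q, pd_const, pd_Q]; ring

lemma pd_psiL {x : Fin n → ℝ} (hx : x ∈ eball n) (i : Fin n) :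
    pd i psiL x = psiL x * (4 * x i) / (1 - Q x) := by
  have hne := oneSubQ_ne hx
  have hdψ : DifferentiableAt ℝ (psiL (n := n)) x := sm_psiL.diffAt hx
  have hd2 : DifferentiableAt ℝ (fun y : Fin n → ℝ => (1 - Q y)^2) x := by
    have : (fun y : Fin n → ℝ => (1 - Q y)^2) = fun y => (1 - Q y) * (1 - Q y) := by
      funext y; ring
    rw [this]; exact diffAt_oneSubQ.mul diffAt_oneSubQ
  have heq : Set.EqOn (fun y => psiL y * (1 - Q y)^2) (fun _ => (4:ℝ)) (eball n) := by
    intro y hy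
    have h2 : (1 - Q y)^2 ≠ 0 := pow_ne_zero 2 (oneSubQ_ne hy)
    show psiL y * (1 - Q y)^2 = 4
    rw [show psiL y = 4 / (1 - Q y)^2 from rfl, div_mul_cancel₀ _ h2]
  have h0 : pd i (fun y => psiL y * (1 - Q y)^2) x = 0 := by
    rw [pd_congr heq hx i, pd_const]
  rw [pd_mul hdψ hd2 i] at h0
  have hpd2 : pd i (fun y : Fin n → ℝ => (1 - Q y)^2) x = -(4 * x i) * (1 - Q x) := by
    have : (fun y : Fin n → ℝ => (1 - Q y)^2) = fun y => (1 - Q y) * (1 - Q y) := by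
      funext y; ring
    rw [this, pd_mul diffAt_oneSubQ diffAt_oneSubQ, pd_oneSubQ]; ring
  rw [hpd2] at h0
  have key2 : (1 - Q x) * ((1 - Q x) * pd i psiL x) = (1 - Q x) * (psiL x * (4 * x i)) := by
    linear_combination h0
  have key3 := mul_left_cancel₀ hne key2
  rw [eq_div_iff hne]
  linear_combination key3

end S5

namespace S5
open scoped ContDiff
variable {n : ℕ}

lemma psiL_pos {x : Fin n → ℝ} (hx : x ∈ eball n) : 0 < psiL x := by
  have h := oneSubQ_pos hx
  have : psiL x = 4 / (1 - Q x)^2 := rfl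
  rw [this]
  positivity

lemma psiL_ne {x : Fin n → ℝ} (hx : x ∈ eball n) : psiL x ≠ 0 := ne_of_gt (psiL_pos hx)

lemma gamma_sum (Ψ : (Fin n → ℝ) → ℝ) (i j : Fin n) (x : Fin n → ℝ) (c : Fin n → ℝ) :
    ∑ k, gammaConf Ψ k i j x * c k
    = (1/(2*Ψ x)) * (pd i Ψ x * c j + pd j Ψ x * c i
        - (if i = j then 1 else 0) * ∑ k, pd k Ψ x * c k) := by
  have hterm : ∀ k, gammaConf Ψ k i j x * c k
      = (if k = j then (1/(2*Ψ x)) * (pd i Ψ x * c j) else 0)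
      + (if k = i then (1/(2*Ψ x)) * (pd j Ψ x * c i) else 0)
      - (if i = j then 1 else 0) * ((1/(2*Ψ x)) * (pd k Ψ x * c k)) := by
    intro k
    unfold gammaConf
    by_cases h1 : k = j
    · by_cases h2 : k = i
      · subst_eqs; simp; try ring
      · have hij : ¬ (i = j) := fun hc => h2 (by rw [h1, ← hc])
        have hji : ¬ (j = i) := fun hc => hij hc.symm
        simp [h1, h2, hij, hji]; try ring
    · by_cases h2 : k = i
      · have hij : ¬ (i = j) := fun hc => h1 (by rw [h2, hc])
        have hji : ¬ (j = i) := fun hc => hij hc.symm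
        simp [h1, h2, hij, hji]; try ring
      · by_cases hij : i = j
        · subst hij; simp [h1, h2]; try ring
        · have hji : ¬ (j = i) := fun hc => hij hc.symm
          simp [h1, h2, hij, hji]; try ring
  rw [Finset.sum_congr rfl (fun k _ => hterm k), Finset.sum_sub_distrib,
    Finset.sum_add_distrib, Finset.sum_ite_eq', Finset.sum_ite_eq', ← Finset.mul_sum,
    ← Finset.mul_sum]
  simp only [Finset.mem_univ, if_true]
  ring

/-- the Euclidean inner product of x with X -/
def G (X : Fin n → (Fin n → ℝ) → ℝ) (x : Fin n → ℝ) : ℝ := ∑ k, x k * X k x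

lemma sm_G {X : Fin n → (Fin n → ℝ) → ℝ} (hX : ∀ i, Sm n (X i)) : Sm n (G X) :=
  Sm.sum (fun k => (Sm.coord k).mul (hX k))

lemma killing_E {X : Fin n → (Fin n → ℝ) → ℝ} (hX : ∀ i, Sm n (X i))
    (hK : ∀ (i j : Fin n), ∀ x ∈ eball n,
      covA psiL (fun k y => psiL y * X k y) i j x
        + covA psiL (fun k y => psiL y * X k y) j i x = 0)
    (i j : Fin n) {x : Fin n → ℝ} (hx : x ∈ eball n) :
    pd i (X j) x + pd j (X i) x
      = 2 * (if i = j then 1 else 0) * (-2 * G X x / (1 - Q x)) := by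
  have hne := oneSubQ_ne hx
  have hψ := psiL_ne hx
  have h0 := hK i j x hx
  unfold covA at h0
  have hA : ∀ (k i' : Fin n), pd i' (fun y => psiL y * X k y) x
      = psiL x * pd i' (X k) x + X k x * pd i' psiL x :=
    fun k i' => pd_mul (sm_psiL.diffAt hx) ((hX k).diffAt hx) i'
  have hSum : ∑ k, pd k psiL x * (psiL x * X k x)
      = 4 * (psiL x)^2 / (1 - Q x) * G X x := by
    rw [Finset.sum_congr rfl (fun k _ => by rw [pd_psiL hx k]), G, Finset.mul_sum]
    exact Finset.sum_congr rfl (fun k _ => by ring)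
  have hgs : ∀ (i' j' : Fin n), ∑ k, gammaConf psiL k i' j' x * (psiL x * X k x)
      = 2 * psiL x / (1 - Q x) * (x i' * X j' x + x j' * X i' x
          - (if i' = j' then 1 else 0) * G X x) := by
    intro i' j'
    rw [gamma_sum psiL i' j' x (fun k => psiL x * X k x), hSum, pd_psiL hx i', pd_psiL hx j']
    by_cases hij : i' = j'
    · rw [if_pos hij]
      field_simp; ring
    · rw [if_neg hij]
      field_simp; ring
  simp only [] at h0
  rw [hA j i, hA i j, hgs i j, hgs j i] at h0
  rw [pd_psiL hx i, pd_psiL hx j] at h0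
  by_cases h : i = j
  · rw [if_pos h, if_pos h.symm] at h0
    rw [if_pos h]
    have hmain : psiL x * ((1 - Q x) * (pd i (X j) x + pd j (X i) x) + 4 * G X x)
        = psiL x * 0 := by
      field_simp at h0
      linear_combination h0
    have hdiv : (1 - Q x) * (pd i (X j) x + pd j (X i) x) + 4 * G X x = 0 := by
      have := mul_left_cancel₀ hψ hmain
      linarith [this]
    field_simp
    linear_combination hdiv
  · have hji : ¬ (j = i) := fun hc => h hc.symm
    rw [if_neg h, if_neg hji] at h0
    rw [if_neg h]
    have hmain : psiL x * ((1 - Q x) * (pd i (X j) x + pd j (X i) x)) = psiL x * 0 := by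
      field_simp at h0
      linear_combination h0
    have hdiv := mul_left_cancel₀ hne (mul_left_cancel₀ hψ (by linear_combination hmain :
      psiL x * ((1 - Q x) * (pd i (X j) x + pd j (X i) x)) = psiL x * ((1 - Q x) * 0)))
    rw [hdiv]
    ring

end S5

namespace S5
open scoped ContDiff
variable {n : ℕ}

/-- the conformal factor of the Killing field -/
def phi (X : Fin n → (Fin n → ℝ) → ℝ) (x : Fin n → ℝ) : ℝ := -2 * G X x / (1 - Q x)

lemma sm_phi {X : Fin n → (Fin n → ℝ) → ℝ} (hX : ∀ i, Sm n (X i)) : Sm n (phi X) :=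
  Sm.div ((Sm.const (-2)).mul (sm_G hX)) ((Sm.const 1).sub sm_Q) (fun _ hx => oneSubQ_ne hx)

lemma phi_zero {X : Fin n → (Fin n → ℝ) → ℝ} : phi X 0 = 0 := by
  unfold phi G
  simp

/-- the Killing equation in flat form -/
def EqE (X : Fin n → (Fin n → ℝ) → ℝ) : Prop :=
  ∀ (i j : Fin n), ∀ x ∈ eball n,
    pd i (X j) x + pd j (X i) x = 2 * (if i = j then 1 else 0) * phi X x

lemma pd_G {X : Fin n → (Fin n → ℝ) → ℝ} (hX : ∀ i, Sm n (X i)) {x : Fin n → ℝ}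
    (hx : x ∈ eball n) (j : Fin n) :
    pd j (G X) x = X j x + ∑ k, x k * pd j (X k) x := by
  unfold G
  rw [pd_sum (fun k => (diffAt_coord k).fun_mul ((hX k).diffAt hx)) j,
    Finset.sum_congr rfl (fun k _ => pd_mul (diffAt_coord k) ((hX k).diffAt hx) j),
    Finset.sum_add_distrib]
  have : ∑ k, X k x * pd j (fun y => y k) x = X j x := by
    rw [Finset.sum_congr rfl (fun k _ => by rw [pd_coord k x j])]
    simp [mul_ite, Finset.sum_ite_eq]
  rw [this]
  ring

lemma star_eq {X : Fin n → (Fin n → ℝ) → ℝ} (hX : ∀ i, Sm n (X i)) (hE : EqE X)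
    (j : Fin n) {x : Fin n → ℝ} (hx : x ∈ eball n) :
    pd j (phi X) x * (1 - Q x) + 2 * x j * phi X x
      = -2 * X j x + 2 * ∑ k, x k * pd k (X j) x := by
  have hcon : Set.EqOn (fun y => phi X y * (1 - Q y)) (fun y => -2 * G X y) (eball n) := by
    intro y hy
    show phi X y * (1 - Q y) = -2 * G X y
    unfold phi
    rw [div_mul_cancel₀ _ (oneSubQ_ne hy)]
  have h1 : pd j (fun y => phi X y * (1 - Q y)) x = pd j (fun y => -2 * G X y) x :=
    pd_congr hcon hx j
  rw [pd_mul ((sm_phi hX).diffAt hx) diffAt_oneSubQ, pd_oneSubQ,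
    pd_const_mul ((sm_G hX).diffAt hx), pd_G hX hx j] at h1
  have hswap : ∑ k, x k * pd j (X k) x
      = 2 * x j * phi X x - ∑ k, x k * pd k (X j) x := by
    have hterm : ∀ k, x k * pd j (X k) x
        = 2 * (if j = k then 1 else 0) * phi X x * x k - x k * pd k (X j) x := by
      intro k
      have := hE j k x hx
      linear_combination x k * this
    rw [Finset.sum_congr rfl (fun k _ => hterm k), Finset.sum_sub_distrib]
    have : ∑ k, 2 * (if j = k then 1 else 0) * phi X x * x k = 2 * x j * phi X x := by
      simp [ite_mul, mul_ite, Finset.sum_ite_eq]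
      ring
    rw [this]
  rw [hswap] at h1
  linarith [h1]

lemma second_deriv {X : Fin n → (Fin n → ℝ) → ℝ} (hX : ∀ i, Sm n (X i)) (hE : EqE X)
    (i j k : Fin n) {x : Fin n → ℝ} (hx : x ∈ eball n) :
    pd i (pd j (X k)) x = (if j = k then 1 else 0) * pd i (phi X) x
      + (if i = k then 1 else 0) * pd j (phi X) x
      - (if i = j then 1 else 0) * pd k (phi X) x := by
  have hS : ∀ (a b c : Fin n), pd c (pd a (X b)) x + pd c (pd b (X a)) x
      = 2 * (if a = b then 1 else 0) * pd c (phi X) x := by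
    intro a b c
    have heq : Set.EqOn (fun y => pd a (X b) y + pd b (X a) y)
        (fun y => 2 * (if a = b then 1 else 0) * phi X y) (eball n) := fun y hy => hE a b y hy
    have h1 : pd c (fun y => pd a (X b) y + pd b (X a) y) x
        = pd c (fun y => 2 * (if a = b then 1 else 0) * phi X y) x := pd_congr heq hx c
    rw [pd_add (((hX b).pd a).diffAt hx) (((hX a).pd b).diffAt hx),
      pd_const_mul ((sm_phi hX).diffAt hx)] at h1
    exact h1
  have h1 := hS j k i
  have h2 := hS i k j
  have h3 := hS i j k
  have c1 := pd_comm ((hX j)) hx i k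
  have c2 := pd_comm ((hX i)) hx j k
  have c3 := pd_comm ((hX k)) hx i j
  linarith [h1, h2, h3, c1, c2, c3]

lemma dd_phi {X : Fin n → (Fin n → ℝ) → ℝ} (hX : ∀ i, Sm n (X i)) (hE : EqE X)
    (i j : Fin n) {x : Fin n → ℝ} (hx : x ∈ eball n) :
    pd i (pd j (phi X)) x * (1 - Q x)
      = 2 * (if i = j then 1 else 0) * ((∑ k, x k * pd k (phi X) x) - phi X x) := by
  have heq : Set.EqOn (fun y => pd j (phi X) y * (1 - Q y) + 2 * y j * phi X y)
      (fun y => -2 * X j y + 2 * ∑ k, y k * pd k (X j) y) (eball n) :=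
    fun y hy => star_eq hX hE j hy
  have h1 := pd_congr heq hx i
  -- expand LHS
  have hL : pd i (fun y => pd j (phi X) y * (1 - Q y) + 2 * y j * phi X y) x
      = (pd i (pd j (phi X)) x * (1 - Q x) + pd j (phi X) x * (-(2 * x i)))
        + 2 * ((if i = j then 1 else 0) * phi X x + x j * pd i (phi X) x) := by
    rw [pd_add (((sm_phi hX).pd j).diffAt hx |>.fun_mul diffAt_oneSubQ)
      (((differentiableAt_const (2:ℝ)).fun_mul (diffAt_coord j)).fun_mul ((sm_phi hX).diffAt hx)),
      pd_mul (((sm_phi hX).pd j).diffAt hx) diffAt_oneSubQ, pd_oneSubQ]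
    have h2 : pd i (fun y => 2 * y j * phi X y) x
        = 2 * x j * pd i (phi X) x + phi X x * (2 * (if i = j then 1 else 0)) := by
      rw [pd_mul ((differentiableAt_const (2:ℝ)).fun_mul (diffAt_coord j)) ((sm_phi hX).diffAt hx),
        pd_const_mul (diffAt_coord j), pd_coord]
    rw [h2]
    ring
  -- expand RHS
  have dsum : DifferentiableAt ℝ (fun y => ∑ k, y k * pd k (X j) y) x :=
    DifferentiableAt.fun_sum (fun k _ => (diffAt_coord k).fun_mul (((hX j).pd k).diffAt hx))
  have hR : pd i (fun y => -2 * X j y + 2 * ∑ k, y k * pd k (X j) y) x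
      = -2 * pd i (X j) x
        + 2 * (pd i (X j) x + ∑ k, x k * pd i (pd k (X j)) x) := by
    rw [pd_add ((differentiableAt_const (-2:ℝ)).fun_mul ((hX j).diffAt hx))
        ((differentiableAt_const (2:ℝ)).fun_mul dsum),
      pd_const_mul ((hX j).diffAt hx), pd_const_mul dsum,
      pd_sum (fun k => (diffAt_coord k).fun_mul (((hX j).pd k).diffAt hx)) i,
      Finset.sum_congr rfl
        (fun k _ => pd_mul (diffAt_coord k) (((hX j).pd k).diffAt hx) i),
      Finset.sum_add_distrib]
    have : ∑ k, pd k (X j) x * pd i (fun y => y k) x = pd i (X j) x := by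
      rw [Finset.sum_congr rfl (fun k _ => by rw [pd_coord k x i])]
      simp [mul_ite, Finset.sum_ite_eq]
    rw [this]
    ring
  rw [hL, hR] at h1
  -- use second_deriv on the sum
  have hsum : ∑ k, x k * pd i (pd k (X j)) x
      = x j * pd i (phi X) x
        + (if i = j then 1 else 0) * ∑ k, x k * pd k (phi X) x
        - x i * pd j (phi X) x := by
    have hterm : ∀ k, x k * pd i (pd k (X j)) x
        = x k * ((if k = j then 1 else 0) * pd i (phi X) x
            + (if i = j then 1 else 0) * pd k (phi X) x
            - (if i = k then 1 else 0) * pd j (phi X) x) := by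
      intro k
      rw [second_deriv hX hE i k j hx]
    rw [Finset.sum_congr rfl (fun k _ => hterm k)]
    have expand : ∀ k, x k * ((if k = j then 1 else 0) * pd i (phi X) x
            + (if i = j then 1 else 0) * pd k (phi X) x
            - (if i = k then 1 else 0) * pd j (phi X) x)
        = (if k = j then x k * pd i (phi X) x else 0)
          + (if i = j then 1 else 0) * (x k * pd k (phi X) x)
          - (if i = k then x k * pd j (phi X) x else 0) := by
      intro k
      split_ifs <;> ring
    rw [Finset.sum_congr rfl (fun k _ => expand k), Finset.sum_sub_distrib,
      Finset.sum_add_distrib, Finset.sum_ite_eq', Finset.sum_ite_eq, ← Finset.mul_sum]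
    simp only [Finset.mem_univ, if_true]
    try ring
  rw [hsum] at h1
  by_cases h : i = j
  · rw [if_pos h] at h1 ⊢
    linarith [h1]
  · rw [if_neg h] at h1 ⊢
    linarith [h1]

end S5

namespace S5
open scoped ContDiff
variable {n : ℕ}

lemma Q_zero : Q (0 : Fin n → ℝ) = 0 := by simp [Q]

lemma offdiag {X : Fin n → (Fin n → ℝ) → ℝ} (hX : ∀ i, Sm n (X i)) (hE : EqE X)
    {i j : Fin n} (hij : i ≠ j) {x : Fin n → ℝ} (hx : x ∈ eball n) :
    pd i (pd j (phi X)) x = 0 := by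
  have h := dd_phi hX hE i j hx
  rw [if_neg hij] at h
  have hne := oneSubQ_ne hx
  have : pd i (pd j (phi X)) x * (1 - Q x) = 0 := by rw [h]; ring
  rcases mul_eq_zero.1 this with h' | h'
  · exact h'
  · exact absurd h' hne

lemma hess_zero (hn : 2 ≤ n) {X : Fin n → (Fin n → ℝ) → ℝ} (hX : ∀ i, Sm n (X i)) (hE : EqE X)
    (i j : Fin n) {x : Fin n → ℝ} (hx : x ∈ eball n) :
    pd i (pd j (phi X)) x = 0 := by
  have h0n : 0 < n := by omega
  have h1n : 1 < n := by omega
  set i0 : Fin n := ⟨0, h0n⟩ with hi0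
  set i1 : Fin n := ⟨1, h1n⟩ with hi1
  have hne01 : i0 ≠ i1 := by simp [hi0, hi1, Fin.ext_iff]
  -- diagonal entries all agree
  have diag : ∀ (a : Fin n), ∀ y ∈ eball n,
      pd a (pd a (phi X)) y = pd i0 (pd i0 (phi X)) y := by
    intro a y hy
    have h1 := dd_phi hX hE a a hy
    have h2 := dd_phi hX hE i0 i0 hy
    rw [if_pos rfl] at h1 h2
    have hne := oneSubQ_ne hy
    have : pd a (pd a (phi X)) y * (1 - Q y) = pd i0 (pd i0 (phi X)) y * (1 - Q y) := by
      rw [h1, h2]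
    exact mul_right_cancel₀ hne this
  -- the common diagonal value has vanishing derivatives
  have pdc : ∀ (j' : Fin n), ∀ y ∈ eball n, pd j' (pd i0 (pd i0 (phi X))) y = 0 := by
    intro j' y hy
    obtain ⟨a, ha⟩ : ∃ a : Fin n, a ≠ j' := by
      by_cases h : j' = i0
      · exact ⟨i1, by rw [h]; exact fun hc => hne01 hc.symm⟩
      · exact ⟨i0, fun hc => h hc.symm⟩
    have e1 : Set.EqOn (pd i0 (pd i0 (phi X))) (pd a (pd a (phi X))) (eball n) :=
      fun z hz => (diag a z hz).symm
    rw [pd_congr e1 hy j']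
    have e2 := pd_comm ((sm_phi hX).pd a) hy j' a
    rw [e2]
    have e3 : Set.EqOn (pd j' (pd a (phi X))) (fun _ => (0:ℝ)) (eball n) := by
      intro z hz
      exact offdiag hX hE (fun hc => ha hc.symm) hz
    rw [pd_congr e3 hy a, pd_const]
  -- value at zero is zero
  have c0 : pd i0 (pd i0 (phi X)) 0 = 0 := by
    have h := dd_phi hX hE i0 i0 zero_mem_eball
    rw [if_pos rfl, Q_zero, phi_zero] at h
    simpa using h
  have czero : ∀ y ∈ eball n, pd i0 (pd i0 (phi X)) y = 0 := by
    intro y hy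
    have := const_of_pd_zero (((sm_phi hX).pd i0).pd i0) pdc hy zero_mem_eball
    rw [this, c0]
  by_cases h : i = j
  · rw [h, diag j x hx, czero x hx]
  · exact offdiag hX hE h hx

/-- the constants `b` -/
def bb (X : Fin n → (Fin n → ℝ) → ℝ) (i : Fin n) : ℝ := pd i (phi X) 0

lemma pd_phi_const (hn : 2 ≤ n) {X : Fin n → (Fin n → ℝ) → ℝ} (hX : ∀ i, Sm n (X i))
    (hE : EqE X) (i : Fin n) {x : Fin n → ℝ} (hx : x ∈ eball n) :
    pd i (phi X) x = bb X i :=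
  const_of_pd_zero ((sm_phi hX).pd i) (fun j y hy => hess_zero hn hX hE j i hy) hx zero_mem_eball

lemma bb_eq {X : Fin n → (Fin n → ℝ) → ℝ} (hX : ∀ i, Sm n (X i)) (hE : EqE X) (i : Fin n) :
    bb X i = -2 * X i 0 := by
  have h := star_eq hX hE (j := i) zero_mem_eball
  rw [Q_zero, phi_zero] at h
  have hz : ∀ k : Fin n, (0 : Fin n → ℝ) k = 0 := fun k => rfl
  simp only [hz] at h
  simp at h
  unfold bb
  linarith [h]

lemma sd_const (hn : 2 ≤ n) {X : Fin n → (Fin n → ℝ) → ℝ} (hX : ∀ i, Sm n (X i)) (hE : EqE X)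
    (i j k : Fin n) {x : Fin n → ℝ} (hx : x ∈ eball n) :
    pd i (pd j (X k)) x = (if j = k then 1 else 0) * bb X i
      + (if i = k then 1 else 0) * bb X j - (if i = j then 1 else 0) * bb X k := by
  rw [second_deriv hX hE i j k hx, pd_phi_const hn hX hE i hx, pd_phi_const hn hX hE j hx,
    pd_phi_const hn hX hE k hx]

lemma pd_lin (b : Fin n → ℝ) (i : Fin n) (x : Fin n → ℝ) :
    pd i (fun y => ∑ m, b m * y m) x = b i := by
  rw [pd_sum (fun m => (differentiableAt_const (b m)).fun_mul (diffAt_coord m)) i,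
    Finset.sum_congr rfl (fun m _ => pd_const_mul (diffAt_coord m) (b m) i),
    Finset.sum_congr rfl (fun m _ => by rw [pd_coord m x i])]
  simp [mul_ite, Finset.sum_ite_eq]

lemma sm_lin (b : Fin n → ℝ) : Sm n (fun y => ∑ m, b m * y m) :=
  Sm.sum (fun m => (Sm.const (b m)).mul (Sm.coord m))

lemma pdX_eq (hn : 2 ≤ n) {X : Fin n → (Fin n → ℝ) → ℝ} (hX : ∀ i, Sm n (X i)) (hE : EqE X)
    (j k : Fin n) {x : Fin n → ℝ} (hx : x ∈ eball n) :
    pd j (X k) x = (if j = k then 1 else 0) * (∑ m, bb X m * x m)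
      + x k * bb X j - bb X k * x j + pd j (X k) 0 := by
  set P : (Fin n → ℝ) → ℝ := fun y => (if j = k then 1 else 0) * (∑ m, bb X m * y m)
      + y k * bb X j - bb X k * y j + pd j (X k) 0 with hP
  have smP : Sm n P := by
    apply Sm.add
    apply Sm.sub
    apply Sm.add
    · exact (Sm.const _).mul (sm_lin (bb X))
    · exact (Sm.coord k).mul (Sm.const _)
    · exact (Sm.const _).mul (Sm.coord j)
    · exact Sm.const _
  have hdP : ∀ {y : Fin n → ℝ}, y ∈ eball n → ∀ (i : Fin n),
      pd i P y = (if j = k then 1 else 0) * bb X i + (if i = k then 1 else 0) * bb X j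
        - (if i = j then 1 else 0) * bb X k := by
    intro y hy i
    rw [hP]
    have d1 : DifferentiableAt ℝ (fun y : Fin n → ℝ =>
        (if j = k then (1:ℝ) else 0) * (∑ m, bb X m * y m)) y :=
      (differentiableAt_const _).mul ((sm_lin (bb X)).diffAt hy)
    have d2 : DifferentiableAt ℝ (fun y : Fin n → ℝ => y k * bb X j) y :=
      (diffAt_coord k).mul (differentiableAt_const _)
    have d3 : DifferentiableAt ℝ (fun y : Fin n → ℝ => bb X k * y j) y :=
      (differentiableAt_const _).mul (diffAt_coord j)
    rw [pd_add ((d1.fun_add d2).fun_sub d3) (differentiableAt_const _),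
      pd_sub (d1.fun_add d2) d3, pd_add d1 d2, pd_const,
      pd_const_mul ((sm_lin (bb X)).diffAt hy), pd_lin,
      pd_mul (diffAt_coord k) (differentiableAt_const _),
      pd_const_mul (diffAt_coord j), pd_coord, pd_coord, pd_const]
    ring
  have hzero : ∀ i : Fin n, ∀ y ∈ eball n, pd i (fun z => pd j (X k) z - P z) y = 0 := by
    intro i y hy
    rw [pd_sub (((hX k).pd j).diffAt hy) (smP.diffAt hy), hdP hy i,
      sd_const hn hX hE i j k hy]
    ring
  have hconst := const_of_pd_zero (((hX k).pd j).sub smP) hzero hx zero_mem_eball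
  have hP0 : P 0 = pd j (X k) 0 := by
    rw [hP]
    simp
  have : pd j (X k) x - P x = pd j (X k) 0 - P 0 := hconst
  rw [hP0] at this
  have : pd j (X k) x = P x := by linarith [this]
  rw [this, hP]

end S5

/-- any Killing vector field `X` of the hyperbolic metric `Ψ·Σ(dxᵏ)²`,
`Ψ = 4/(1−|x|²)²`, on the unit ball has components
`Xⁱ = xⁱ(Σ bₖxᵏ) − (1/2)bᵢ|x|² + Σ fᵢₖxᵏ − (1/2)bᵢ` with `f` skew-symmetric. -/
theorem stmt5 {n : ℕ} (hn : 2 ≤ n) (X : Fin n → (Fin n → ℝ) → ℝ)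
    (hsmooth : ∀ i, ContDiffOn ℝ (⊤ : ℕ∞) (X i) (eball n))
    (hKilling : ∀ (i j : Fin n), ∀ x ∈ eball n,
      covA psiL (fun k y => psiL y * X k y) i j x
        + covA psiL (fun k y => psiL y * X k y) j i x = 0) :
    ∃ (b : Fin n → ℝ) (f : Fin n → Fin n → ℝ),
      (∀ i k, f k i = - f i k) ∧
      ∀ i, ∀ x ∈ eball n, X i x =
        x i * (∑ k, b k * x k) - (1/2) * b i * (∑ k, (x k)^2)
        + (∑ k, f i k * x k) - (1/2) * b i := by
  classical
  have hX : ∀ i, S5.Sm n (X i) := fun i => (hsmooth i).of_le (by simp)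
  have hE : S5.EqE X := fun i j x hx => S5.killing_E hX hKilling i j hx
  refine ⟨S5.bb X, fun i k => pd k (X i) 0, ?_, ?_⟩
  · intro i k
    have h := hE i k 0 S5.zero_mem_eball
    rw [S5.phi_zero] at h
    have h' : pd i (X k) 0 + pd k (X i) 0 = 0 := by
      rw [h]; ring
    linarith [h']
  · intro i x hx
    set L : (Fin n → ℝ) → ℝ := fun y => ∑ k, S5.bb X k * y k with hL
    set P : (Fin n → ℝ) → ℝ := fun y => y i * L y - (1/2) * S5.bb X i * S5.Q y
        + (∑ k, pd k (X i) 0 * y k) - (1/2) * S5.bb X i with hP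
    have smP : S5.Sm n P := by
      apply S5.Sm.sub
      apply S5.Sm.add
      apply S5.Sm.sub
      · exact (S5.Sm.coord i).mul (S5.sm_lin (S5.bb X))
      · exact ((S5.Sm.const _).mul (S5.Sm.const _)).mul S5.sm_Q
      · exact S5.sm_lin (fun k => pd k (X i) 0)
      · exact S5.Sm.const _
    have hzero : ∀ j : Fin n, ∀ y ∈ eball n, pd j (fun z => X i z - P z) y = 0 := by
      intro j y hy
      have dL : DifferentiableAt ℝ L y := (S5.sm_lin (S5.bb X)).diffAt hy
      have d1 : DifferentiableAt ℝ (fun z : Fin n → ℝ => z i * L z) y :=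
        (S5.diffAt_coord i).mul dL
      have d2 : DifferentiableAt ℝ (fun z : Fin n → ℝ => (1/2) * S5.bb X i * S5.Q z) y :=
        (differentiableAt_const _).mul S5.diffAt_Q
      have d3 : DifferentiableAt ℝ (fun z : Fin n → ℝ => ∑ k, pd k (X i) 0 * z k) y :=
        (S5.sm_lin (fun k => pd k (X i) 0)).diffAt hy
      have hpdP : pd j P y = (if j = i then 1 else 0) * L y + y i * S5.bb X j
          - S5.bb X i * y j + pd j (X i) 0 := by
        rw [hP]
        rw [S5.pd_sub (((d1.fun_sub d2).fun_add d3)) (differentiableAt_const _),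
          S5.pd_add (d1.fun_sub d2) d3, S5.pd_sub d1 d2,
          S5.pd_mul (S5.diffAt_coord i) dL,
          S5.pd_const_mul S5.diffAt_Q, S5.pd_Q, S5.pd_coord, S5.pd_const,
          S5.pd_lin (S5.bb X) j, S5.pd_lin (fun k => pd k (X i) 0) j]
        ring
      rw [S5.pd_sub ((hX i).diffAt hy) (smP.diffAt hy), hpdP,
        S5.pdX_eq hn hX hE j i hy]
      ring
    have hconst := S5.const_of_pd_zero ((hX i).sub smP) hzero hx S5.zero_mem_eball
    have hP0 : P 0 = -(1/2) * S5.bb X i := by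
      rw [hP]
      simp [S5.Q_zero]
    have hX0 : X i 0 - P 0 = 0 := by
      rw [hP0, S5.bb_eq hX hE i]
      ring
    have hfin : X i x = P x := by
      rw [hX0] at hconst
      linarith [hconst]
    rw [hfin, hP, hL]
    show _ = x i * (∑ k, S5.bb X k * x k) - (1/2) * S5.bb X i * S5.Q x
        + (∑ k, pd k (X i) 0 * x k) - (1/2) * S5.bb X i
    rfl
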